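/- arXiv:2305.17240 — 2 statements merged into one kernel-verified Lean document; each statement's English description precedes it below -/
import Mathlib

section
/- Under the hypotheses of the previous two statements combined, every equilibrium (x̄, λ̄) of the saddle-point dynamics ẋ = −∇ₓF, λ̇ = ∇_λF is a global min-max saddle point of F: F(x̄, λ) ≤ F(x̄, λ̄) ≤ F(x, λ̄) for all x, λ. -/
open Matrix
open scoped RealInnerProductSpace

/-- Composition of `toEuclideanLin` with a matrix product. -/
lemma toEuclideanLin_mul_apply {m k l : ℕ} (A : Matrix (Fin m) (Fin k) ℝ)
    (B : Matrix (Fin k) (Fin l) ℝ) (w : EuclideanSpace ℝ (Fin l)) :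
    Matrix.toEuclideanLin (A * B) w = Matrix.toEuclideanLin A (Matrix.toEuclideanLin B w) := by
  simp [Matrix.toEuclideanLin_apply, Matrix.mulVec_mulVec]

/-- Real adjoint relation for `toEuclideanLin`. -/
lemma inner_toEuclideanLin_transpose {m k : ℕ} (A : Matrix (Fin m) (Fin k) ℝ)
    (u : EuclideanSpace ℝ (Fin m)) (w : EuclideanSpace ℝ (Fin k)) :
    ⟪Matrix.toEuclideanLin Aᵀ u, w⟫ = ⟪u, Matrix.toEuclideanLin A w⟫ := by
  simp only [Matrix.toEuclideanLin_apply, PiLp.inner_apply, RCLike.inner_apply,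
    starRingEnd_apply, star_trivial]
  have : (Aᵀ *ᵥ (WithLp.equiv 2 (Fin m → ℝ)) u) ⬝ᵥ (WithLp.equiv 2 (Fin k → ℝ)) w
      = (WithLp.equiv 2 (Fin m → ℝ)) u ⬝ᵥ (A *ᵥ (WithLp.equiv 2 (Fin k → ℝ)) w) := by
    rw [Matrix.mulVec_transpose, ← Matrix.dotProduct_mulVec]
  simpa [dotProduct, mul_comm] using this

/-- First-order condition for a convex differentiable function. -/
lemma convex_gradient_ineq {n : ℕ} {f : EuclideanSpace ℝ (Fin n) → ℝ}
    (hconv : ConvexOn ℝ Set.univ f) (hdiff : Differentiable ℝ f)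
    (x y : EuclideanSpace ℝ (Fin n)) :
    f x + ⟪gradient f x, y - x⟫ ≤ f y := by
  set g : ℝ → ℝ := f ∘ (AffineMap.lineMap x y : ℝ →ᵃ[ℝ] EuclideanSpace ℝ (Fin n)) with hgdef
  have hg : ConvexOn ℝ Set.univ g := by
    have := hconv.comp_affineMap (AffineMap.lineMap x y : ℝ →ᵃ[ℝ] EuclideanSpace ℝ (Fin n))
    simpa using this
  have hline : HasDerivAt
      (fun t : ℝ => (AffineMap.lineMap x y : ℝ →ᵃ[ℝ] EuclideanSpace ℝ (Fin n)) t) (y - x) 0 := by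
    simp only [AffineMap.lineMap_apply_module']
    simpa using ((hasDerivAt_id (0 : ℝ)).smul_const (y - x)).add_const x
  have hF : HasFDerivAt f (InnerProductSpace.toDual ℝ _ (gradient f x) :
      EuclideanSpace ℝ (Fin n) →L[ℝ] ℝ) ((AffineMap.lineMap x y : ℝ →ᵃ[ℝ] _) (0 : ℝ)) := by
    rw [AffineMap.lineMap_apply_zero]
    exact hasGradientAt_iff_hasFDerivAt.mp (hdiff x).hasGradientAt
  have hcomp : HasDerivAt g (⟪gradient f x, y - x⟫) 0 := by
    have := hF.comp_hasDerivAt 0 hline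
    simpa [hgdef, InnerProductSpace.toDual_apply_apply] using this
  have hslope := hg.le_slope_of_hasDerivAt (Set.mem_univ (0 : ℝ)) (Set.mem_univ (1 : ℝ))
    zero_lt_one hcomp
  have hg0 : g 0 = f x := by simp [hgdef]
  have hg1 : g 1 = f y := by simp [hgdef]
  rw [slope_def_field] at hslope
  simp only [hg0, hg1] at hslope
  have : ⟪gradient f x, y - x⟫ ≤ f y - f x := by
    have h := hslope
    field_simp at h
    linarith
  linarith

/-- Every equilibrium `(x̄, λ̄)` of the saddle-point dynamics of the
augmented Lagrangian `F` is a global min-max saddle point: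
`F(x̄, λ) ≤ F(x̄, λ̄) ≤ F(x, λ̄)` for all `x, λ`. -/
theorem stmt_9 {n p : ℕ} (f : EuclideanSpace ℝ (Fin n) → ℝ)
    (hconv : ConvexOn ℝ Set.univ f) (hdiff : Differentiable ℝ f)
    (H : Matrix (Fin p) (Fin n) ℝ) (P : Matrix (Fin p) (Fin p) ℝ)
    (hPsymm : Pᵀ = P) (hPidem : P * P = P)
    (hwell : ∀ y : EuclideanSpace ℝ (Fin p),
      toEuclideanLin Hᵀ y = 0 → (∃ z, toEuclideanLin P z = y) → y = 0)
    (b : EuclideanSpace ℝ (Fin p))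
    (F : EuclideanSpace ℝ (Fin n) → EuclideanSpace ℝ (Fin n) → ℝ)
    (hF : ∀ x l, F x l =
      f x + ⟪l, toEuclideanLin (Hᵀ * P) (toEuclideanLin H x - b)⟫
        + (1 / 2) * ‖toEuclideanLin P (toEuclideanLin H x - b)‖ ^ 2)
    (xbar lbar : EuclideanSpace ℝ (Fin n))
    (heq1 : gradient f xbar + toEuclideanLin (Hᵀ * P * H) lbar = 0)
    (heq2 : toEuclideanLin (Hᵀ * P) (toEuclideanLin H xbar - b) = 0) :
    ∀ (x l : EuclideanSpace ℝ (Fin n)),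
      F xbar l ≤ F xbar lbar ∧ F xbar lbar ≤ F x lbar := by
  intro x l
  have hgrad : gradient f xbar = - toEuclideanLin (Hᵀ * P * H) lbar :=
    eq_neg_of_add_eq_zero_left heq1
  constructor
  · -- first inequality: in fact equality since the λ-term vanishes at x̄
    rw [hF, hF, heq2]
    simp
  · -- second inequality
    set u := toEuclideanLin P (toEuclideanLin H x - b) with hu
    set v := toEuclideanLin P (toEuclideanLin H xbar - b) with hv
    set d := x - xbar with hd
    -- difference of the images
    have hudiff : u - v = toEuclideanLin (P * H) d := by
      rw [hu, hv, hd, toEuclideanLin_mul_apply]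
      rw [← map_sub]
      congr 1
      rw [map_sub]
      abel
    -- symmetry of HᵀPH
    have hsymmM : (Hᵀ * P * H)ᵀ = Hᵀ * P * H := by
      simp [Matrix.transpose_mul, hPsymm, Matrix.mul_assoc]
    -- the cross term vanishes
    have hcross : ⟪v, u - v⟫ = 0 := by
      rw [hudiff]
      have h1 : ⟪v, toEuclideanLin (P * H) d⟫ = ⟪toEuclideanLin ((P * H)ᵀ) v, d⟫ :=
        (inner_toEuclideanLin_transpose (P * H) v d).symm
      have h2 : (P * H)ᵀ = Hᵀ * P := by rw [Matrix.transpose_mul, hPsymm]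
      have h3 : toEuclideanLin (Hᵀ * P) v = 0 := by
        rw [hv, ← toEuclideanLin_mul_apply]
        have : Hᵀ * P * P = Hᵀ * P := by rw [Matrix.mul_assoc, hPidem]
        rw [this, heq2]
      rw [h1, h2, h3, inner_zero_left]
    -- linear (λ) term difference
    have hlin : ⟪lbar, toEuclideanLin (Hᵀ * P) (toEuclideanLin H x - b)⟫
        = ⟪lbar, toEuclideanLin (Hᵀ * P) (toEuclideanLin H xbar - b)⟫
          + ⟪toEuclideanLin (Hᵀ * P * H) lbar, d⟫ := by
      have hdiff2 : toEuclideanLin (Hᵀ * P) (toEuclideanLin H x - b)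
          - toEuclideanLin (Hᵀ * P) (toEuclideanLin H xbar - b)
          = toEuclideanLin (Hᵀ * P * H) d := by
        rw [toEuclideanLin_mul_apply (Hᵀ * P) H, ← map_sub]
        congr 1
        rw [map_sub]
        abel
      have h4 : ⟪lbar, toEuclideanLin (Hᵀ * P * H) d⟫
          = ⟪toEuclideanLin (Hᵀ * P * H) lbar, d⟫ := by
        conv_rhs => rw [← hsymmM]
        rw [inner_toEuclideanLin_transpose]
      have := congrArg (fun w => ⟪lbar, w⟫) hdiff2
      simp only [inner_sub_right] at this
      linarith [h4 ▸ this]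
    -- norm expansion
    have hnorm : ‖u‖ ^ 2 = ‖v‖ ^ 2 + 2 * ⟪v, u - v⟫ + ‖u - v‖ ^ 2 := by
      have : u = v + (u - v) := by abel
      calc ‖u‖ ^ 2 = ‖v + (u - v)‖ ^ 2 := by rw [← this]
        _ = ‖v‖ ^ 2 + 2 * ⟪v, u - v⟫ + ‖u - v‖ ^ 2 := by
            rw [norm_add_sq_real]
    -- convexity inequality for f
    have hfx : f xbar + ⟪gradient f xbar, d⟫ ≤ f x := by
      rw [hd]
      exact convex_gradient_ineq hconv hdiff xbar x
    have hginner : ⟪gradient f xbar, d⟫ = - ⟪toEuclideanLin (Hᵀ * P * H) lbar, d⟫ := by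
      rw [hgrad, inner_neg_left]
    -- assemble
    rw [hF, hF, hlin]
    rw [← hu, ← hv] at *
    have hsq : (0:ℝ) ≤ ‖u - v‖ ^ 2 := sq_nonneg _
    nlinarith [hnorm, hcross, hfx, hginner]
end

section
/- Let P̄ be symmetric idempotent, H̄ ∈ ℝ^{p×q}, and suppose ker(H̄ᵀ) ∩ image(P̄) = {0} and there exists x* with P̄(H̄x* − b̄) = 0. Then every solution of ẋ = −H̄ᵀP̄(H̄x − b̄) converges (exponentially in the constraint residual) to a point x̂ satisfying P̄(H̄x̂ − b̄) = 0. -/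
open Matrix Filter MeasureTheory
open scoped Topology RealInnerProductSpace

lemma euc_mul {m n k : ℕ} (M : Matrix (Fin m) (Fin n) ℝ) (N : Matrix (Fin n) (Fin k) ℝ)
    (v : EuclideanSpace ℝ (Fin k)) :
    toEuclideanLin (M * N) v = toEuclideanLin M (toEuclideanLin N v) := by
  simp [Matrix.toEuclideanLin_apply, Matrix.mulVec_mulVec]

lemma euc_transpose {m n : ℕ} (M : Matrix (Fin m) (Fin n) ℝ) :
    toEuclideanLin Mᵀ = LinearMap.adjoint (toEuclideanLin M) := by
  rw [← Matrix.toEuclideanLin_conjTranspose_eq_adjoint]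
  congr 1

lemma exists_mu {p q : ℕ} (B : EuclideanSpace ℝ (Fin p) →ₗ[ℝ] EuclideanSpace ℝ (Fin q))
    (Q : EuclideanSpace ℝ (Fin p) →ₗ[ℝ] EuclideanSpace ℝ (Fin p))
    (hwell : ∀ y, B y = 0 → (∃ z, Q z = y) → y = 0) :
    ∃ μ : ℝ, 0 < μ ∧ ∀ y, (∃ z, Q z = y) → μ * ‖y‖ ^ 2 ≤ ‖B y‖ ^ 2 := by
  set S : Set (EuclideanSpace ℝ (Fin p)) := ((LinearMap.range Q : Submodule ℝ _) : Set (EuclideanSpace ℝ (Fin p)))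
  have hSclosed : IsClosed S := (LinearMap.range Q).closed_of_finiteDimensional
  set K : Set (EuclideanSpace ℝ (Fin p)) := Metric.sphere 0 1 ∩ S
  have hKcomp : IsCompact K := (isCompact_sphere 0 1).inter_right hSclosed
  by_cases hK : K.Nonempty
  · have hBc : Continuous fun y => ‖B y‖ ^ 2 :=
      (B.toContinuousLinearMap.continuous.norm).pow 2
    obtain ⟨y₀, hy₀K, hy₀min⟩ := hKcomp.exists_isMinOn hK hBc.continuousOn
    have hy₀norm : ‖y₀‖ = 1 := by
      have := hy₀K.1
      simpa [Metric.mem_sphere, dist_eq_norm] using this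
    refine ⟨‖B y₀‖ ^ 2, ?_, ?_⟩
    · have hBy₀ : B y₀ ≠ 0 := by
        intro h0
        have := hwell y₀ h0 hy₀K.2
        rw [this] at hy₀norm; simp at hy₀norm
      have : ‖B y₀‖ ≠ 0 := norm_ne_zero_iff.2 hBy₀
      positivity
    · intro y hy
      rcases eq_or_ne y 0 with rfl | hy0
      · simp
      · set u : EuclideanSpace ℝ (Fin p) := ‖y‖⁻¹ • y with hu
        have hny : ‖y‖ ≠ 0 := norm_ne_zero_iff.2 hy0
        have huS : u ∈ S := by
          obtain ⟨z, hz⟩ := hy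
          exact ⟨‖y‖⁻¹ • z, by simp [hu, ← hz, _root_.map_smul]⟩
        have hunorm : ‖u‖ = 1 := by
          simp [hu, norm_smul, abs_of_nonneg (norm_nonneg y), inv_mul_cancel₀ hny]
        have huK : u ∈ K := ⟨by simp [Metric.mem_sphere, dist_eq_norm, hunorm], huS⟩
        have hmin := hy₀min huK
        have hBy : ‖B y‖ ^ 2 = ‖y‖ ^ 2 * ‖B u‖ ^ 2 := by
          have : B y = ‖y‖ • B u := by
            rw [hu, _root_.map_smul, smul_smul, mul_inv_cancel₀ hny, one_smul]
          rw [this, norm_smul, mul_pow]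
          simp [abs_of_nonneg (norm_nonneg y)]
        rw [hBy]
        calc ‖B y₀‖ ^ 2 * ‖y‖ ^ 2 ≤ ‖B u‖ ^ 2 * ‖y‖ ^ 2 := by
              apply mul_le_mul_of_nonneg_right hmin (by positivity)
          _ = ‖y‖ ^ 2 * ‖B u‖ ^ 2 := by ring
  · refine ⟨1, one_pos, fun y hy => ?_⟩
    have hy0 : y = 0 := by
      by_contra h0
      apply hK
      have hnz : ‖y‖ ≠ 0 := norm_ne_zero_iff.2 h0
      refine ⟨‖y‖⁻¹ • y, ?_, ?_⟩
      · simp [Metric.mem_sphere, dist_eq_norm, norm_smul,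
          abs_of_nonneg (norm_nonneg y), inv_mul_cancel₀ hnz]
      · obtain ⟨z, hz⟩ := hy
        exact ⟨‖y‖⁻¹ • z, by simp [← hz, _root_.map_smul]⟩
    simp [hy0]

/-- Under the well-configured and feasibility assumptions, every
solution of `ẋ = −H̄ᵀP̄(H̄x − b̄)` converges to a point `x̂` satisfying
`P̄(H̄x̂ − b̄) = 0`, with the constraint residual decaying exponentially. -/
theorem stmt_14 {p q : ℕ} (H : Matrix (Fin p) (Fin q) ℝ)
    (P : Matrix (Fin p) (Fin p) ℝ) (hPsymm : Pᵀ = P) (hPidem : P * P = P)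
    (hwell : ∀ y : EuclideanSpace ℝ (Fin p),
      toEuclideanLin Hᵀ y = 0 → (∃ z, toEuclideanLin P z = y) → y = 0)
    (b : EuclideanSpace ℝ (Fin p))
    (hfeas : ∃ xstar : EuclideanSpace ℝ (Fin q),
      toEuclideanLin P (toEuclideanLin H xstar - b) = 0)
    (x : ℝ → EuclideanSpace ℝ (Fin q))
    (hode : ∀ t : ℝ, HasDerivAt x
      (-(toEuclideanLin Hᵀ (toEuclideanLin P (toEuclideanLin H (x t) - b)))) t) :
    ∃ xhat : EuclideanSpace ℝ (Fin q),
      Tendsto x atTop (𝓝 xhat) ∧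
      toEuclideanLin P (toEuclideanLin H xhat - b) = 0 ∧
      ∃ c μ : ℝ, 0 < μ ∧ ∀ t : ℝ, 0 ≤ t →
        ‖toEuclideanLin P (toEuclideanLin H (x t) - b)‖ ≤ c * Real.exp (-μ * t) := by
  obtain ⟨μ, hμ, hkey⟩ := exists_mu (toEuclideanLin Hᵀ) (toEuclideanLin P) hwell

  classical
  set A : EuclideanSpace ℝ (Fin q) →L[ℝ] EuclideanSpace ℝ (Fin p) :=
    LinearMap.toContinuousLinearMap (toEuclideanLin H) with hA
  set B : EuclideanSpace ℝ (Fin p) →L[ℝ] EuclideanSpace ℝ (Fin q) :=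
    LinearMap.toContinuousLinearMap (toEuclideanLin Hᵀ) with hB
  set Q : EuclideanSpace ℝ (Fin p) →L[ℝ] EuclideanSpace ℝ (Fin p) :=
    LinearMap.toContinuousLinearMap (toEuclideanLin P) with hQ
  have hAapp : ∀ v, A v = toEuclideanLin H v := fun v => rfl
  have hBapp : ∀ v, B v = toEuclideanLin Hᵀ v := fun v => rfl
  have hQapp : ∀ v, Q v = toEuclideanLin P v := fun v => rfl
  set r : ℝ → EuclideanSpace ℝ (Fin p) := fun t => Q (A (x t) - b) with hrdef
  have hQQ : ∀ v, Q (Q v) = Q v := fun v => by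
    simp only [hQapp]; rw [← euc_mul, hPidem]
  have hQr : ∀ t, Q (r t) = r t := fun t => hQQ _
  have hQsym : ∀ y z : EuclideanSpace ℝ (Fin p), (inner ℝ (Q y) z : ℝ) = inner ℝ y (Q z) := fun y z => by
    simp only [hQapp]
    conv_lhs => rw [← hPsymm, euc_transpose]
    exact LinearMap.adjoint_inner_left _ _ _
  have hadj : ∀ (y : EuclideanSpace ℝ (Fin p)) (w : EuclideanSpace ℝ (Fin q)),
      (inner ℝ (B y) w : ℝ) = inner ℝ y (A w) := fun y w => by
    simp only [hBapp, hAapp]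
    rw [euc_transpose]
    exact LinearMap.adjoint_inner_left _ _ _
  -- ODE in CLM form
  have hode' : ∀ t, HasDerivAt x (-(B (r t))) t := fun t => hode t
  -- derivative of r
  have hr' : ∀ t, HasDerivAt r (-(Q (A (B (r t))))) t := by
    intro t
    have h1 : HasDerivAt (fun s => A (x s)) (A (-(B (r t)))) t :=
      A.hasFDerivAt.comp_hasDerivAt t (hode' t)
    have h2 : HasDerivAt (fun s => A (x s) - b) (A (-(B (r t)))) t := h1.sub_const b
    have h3 : HasDerivAt r (Q (A (-(B (r t))))) t :=
      Q.hasFDerivAt.comp_hasDerivAt t h2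
    simpa using h3
  -- derivative of φ = ‖r‖²
  set φ : ℝ → ℝ := fun t => (inner ℝ (r t) (r t) : ℝ) with hφdef
  have hφ' : ∀ t, HasDerivAt φ (-(2 * ‖B (r t)‖ ^ 2)) t := by
    intro t
    have h := (hr' t).inner ℝ (hr' t)
    have hkey1 : (inner ℝ (r t) (Q (A (B (r t)))) : ℝ) = ‖B (r t)‖ ^ 2 := by
      rw [← hQsym, hQr, ← hadj, real_inner_self_eq_norm_sq]
    have h2 : (inner ℝ (r t) (-(Q (A (B (r t))))) : ℝ) + (inner ℝ (-(Q (A (B (r t))))) (r t) : ℝ)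
        = -(2 * ‖B (r t)‖ ^ 2) := by
      have hc : (inner ℝ (Q (A (B (r t)))) (r t) : ℝ) = inner ℝ (r t) (Q (A (B (r t)))) :=
        real_inner_comm _ _
      rw [inner_neg_left, inner_neg_right, hc, hkey1]; ring
    rw [← h2]; exact h
  have hφval : ∀ t, φ t = ‖r t‖ ^ 2 := fun t => real_inner_self_eq_norm_sq _
  -- ψ = exp(2μt) φ is antitone
  set ψ : ℝ → ℝ := fun t => Real.exp (2 * μ * t) * φ t with hψdef
  have hψ' : ∀ t, HasDerivAt ψ
      (Real.exp (2 * μ * t) * (2 * μ) * φ t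
        + Real.exp (2 * μ * t) * (-(2 * ‖B (r t)‖ ^ 2))) t := by
    intro t
    have he : HasDerivAt (fun s => Real.exp (2 * μ * s)) (Real.exp (2 * μ * t) * (2 * μ)) t := by
      simpa using ((hasDerivAt_id t).const_mul (2 * μ)).exp
    exact he.mul (hφ' t)
  have hrange : ∀ t, ∃ z, toEuclideanLin P z = r t := fun t => ⟨A (x t) - b, rfl⟩
  have hBr : ∀ t, μ * ‖r t‖ ^ 2 ≤ ‖B (r t)‖ ^ 2 := fun t => hkey _ (hrange t)
  have hψanti : Antitone ψ := by
    apply antitone_of_deriv_nonpos (fun t => (hψ' t).differentiableAt)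
    intro t
    rw [(hψ' t).deriv]
    have h3 : Real.exp (2 * μ * t) * (2 * μ) * φ t
        + Real.exp (2 * μ * t) * (-(2 * ‖B (r t)‖ ^ 2))
        = 2 * Real.exp (2 * μ * t) * (μ * ‖r t‖ ^ 2 - ‖B (r t)‖ ^ 2) := by
      rw [hφval t]; ring
    rw [h3]
    exact mul_nonpos_of_nonneg_of_nonpos (by positivity) (by linarith [hBr t])
  have hφbound : ∀ t, 0 ≤ t → φ t ≤ φ 0 * Real.exp (-(2 * μ) * t) := by
    intro t ht
    have h1 : ψ t ≤ ψ 0 := hψanti ht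
    have h2 : ψ 0 = φ 0 := by simp [hψdef]
    have h3 : Real.exp (2 * μ * t) * φ t ≤ φ 0 := by rw [← h2]; exact h1
    have h6 : Real.exp (2 * μ * t) * Real.exp (-(2 * μ) * t) = 1 := by
      rw [← Real.exp_add, show 2 * μ * t + -(2 * μ) * t = 0 by ring, Real.exp_zero]
    have h7 := mul_le_mul_of_nonneg_right h3 (Real.exp_pos (-(2 * μ) * t)).le
    calc φ t = Real.exp (2 * μ * t) * φ t * Real.exp (-(2 * μ) * t) := by
          rw [mul_comm (Real.exp (2 * μ * t)) (φ t), mul_assoc, h6, mul_one]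
      _ ≤ φ 0 * Real.exp (-(2 * μ) * t) := h7
  have hbound : ∀ t, 0 ≤ t → ‖r t‖ ≤ ‖r 0‖ * Real.exp (-μ * t) := by
    intro t ht
    have hsq : (Real.exp (-μ * t)) ^ 2 = Real.exp (-(2 * μ) * t) := by
      rw [sq, ← Real.exp_add, show -μ * t + -μ * t = -(2 * μ) * t by ring]
    have h1 : ‖r t‖ ^ 2 ≤ (‖r 0‖ * Real.exp (-μ * t)) ^ 2 := by
      calc ‖r t‖ ^ 2 = φ t := (hφval t).symm
        _ ≤ φ 0 * Real.exp (-(2 * μ) * t) := hφbound t ht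
        _ = (‖r 0‖ * Real.exp (-μ * t)) ^ 2 := by rw [mul_pow, hsq, hφval 0]
    have h2 := Real.sqrt_le_sqrt h1
    rwa [Real.sqrt_sq (norm_nonneg _), Real.sqrt_sq (by positivity)] at h2
  -- continuity
  have hxc : Continuous x := by
    rw [continuous_iff_continuousAt]; exact fun t => (hode' t).continuousAt
  have hrc : Continuous r := Q.continuous.comp ((A.continuous.comp hxc).sub continuous_const)
  set f : ℝ → EuclideanSpace ℝ (Fin q) := fun t => -(B (r t)) with hfdef
  have hfc : Continuous f := (B.continuous.comp hrc).neg
  have hfbound : ∀ t ∈ Set.Ioi (0:ℝ), ‖f t‖ ≤ ‖B‖ * ‖r 0‖ * Real.exp (-μ * t) := by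
    intro t ht
    calc ‖f t‖ = ‖B (r t)‖ := norm_neg _
      _ ≤ ‖B‖ * ‖r t‖ := B.le_opNorm _
      _ ≤ ‖B‖ * (‖r 0‖ * Real.exp (-μ * t)) :=
          mul_le_mul_of_nonneg_left (hbound t (le_of_lt ht)) (norm_nonneg _)
      _ = ‖B‖ * ‖r 0‖ * Real.exp (-μ * t) := by ring
  have hgint : IntegrableOn (fun t : ℝ => ‖B‖ * ‖r 0‖ * Real.exp (-μ * t)) (Set.Ioi 0) :=
    (exp_neg_integrableOn_Ioi 0 hμ).const_mul (‖B‖ * ‖r 0‖)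
  have hint : IntegrableOn f (Set.Ioi (0:ℝ)) := by
    apply Integrable.mono' hgint hfc.aestronglyMeasurable.restrict
    exact (ae_restrict_iff' measurableSet_Ioi).2 (Filter.Eventually.of_forall hfbound)
  set xhat := x 0 + ∫ t in Set.Ioi (0:ℝ), f t with hxhat
  have hFTC : ∀ t : ℝ, x t = x 0 + ∫ s in (0:ℝ)..t, f s := by
    intro t
    have h := intervalIntegral.integral_eq_sub_of_hasDerivAt (f := x) (f' := f)
      (fun s _ => hode' s) (hfc.intervalIntegrable 0 t)
    rw [h]; abel
  have hxt : Tendsto x atTop (𝓝 xhat) := by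
    have h1 : Tendsto (fun t : ℝ => ∫ s in (0:ℝ)..t, f s) atTop
        (𝓝 (∫ t in Set.Ioi (0:ℝ), f t)) :=
      intervalIntegral_tendsto_integral_Ioi 0 hint tendsto_id
    have h2 := h1.const_add (x 0)
    exact h2.congr (fun t => (hFTC t).symm)
  have hr0 : Tendsto r atTop (𝓝 0) := by
    apply squeeze_zero_norm' ((eventually_ge_atTop (0:ℝ)).mono (fun t ht => hbound t ht))
    have hμt : Tendsto (fun t : ℝ => μ * t) atTop atTop :=
      Tendsto.const_mul_atTop hμ tendsto_id
    have he : Tendsto (fun t : ℝ => Real.exp (-μ * t)) atTop (𝓝 0) :=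
      (Real.tendsto_exp_neg_atTop_nhds_zero.comp hμt).congr (fun t => by
        simp [Function.comp, neg_mul])
    simpa using he.const_mul (‖r 0‖)
  have hrlim : Tendsto r atTop (𝓝 (Q (A xhat - b))) :=
    (Q.continuous.tendsto _).comp
      ((((A.continuous.tendsto _).comp hxt).sub_const b))
  have hres : Q (A xhat - b) = 0 := tendsto_nhds_unique hrlim hr0
  exact ⟨xhat, hxt, hres, ‖r 0‖, μ, hμ, fun t ht => hbound t ht⟩
end
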